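/- arXiv:0802.1293 — 6 statements merged into one kernel-verified Lean document; each statement's English description precedes it below -/
import Mathlib

section
/- Let A_1, A_2, … be a quasifibonacci sequence of level N. If k ≥ 1 and n is an integer with A_k ≤ n < A_{k+1}, then every a ∈ S_n has length l(a) ∈ {k−1, k}. -/
/-- `A` (with meaningful values at indices `≥ 1`) is a quasifibonacci sequence of level `N`:
the terms are positive, `A (k+N) = A (k+N-1) + ⋯ + A k` for all `k ≥ 1`, and
`A k > A (k-1) + ⋯ + A 1` for all `1 ≤ k ≤ N`. -/
def QuasiFib (N : ℕ) (A : ℕ → ℕ) : Prop :=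
  (∀ i, 1 ≤ i → 0 < A i) ∧
  (∀ k, 1 ≤ k → A (k + N) = ∑ i ∈ Finset.Icc k (k + N - 1), A i) ∧
  (∀ k, 1 ≤ k → k ≤ N → (∑ i ∈ Finset.Icc 1 (k - 1), A i) < A k)

/-- `SRep A n` is the set of partitions of `n` into distinct terms of `A`, encoded as the
finite sets `F` of positive indices with `∑_{i ∈ F} A i = n` (i.e. the 0-1 indicator
sequences of the paper). -/
def SRep (A : ℕ → ℕ) (n : ℕ) : Set (Finset ℕ) :=
  {F | (∀ i ∈ F, 1 ≤ i) ∧ (∑ i ∈ F, A i) = n}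

/-- the length `l(a)`: the largest index `i` with `a_i = 1` (and `0` for the empty set). -/
def len (F : Finset ℕ) : ℕ := F.sup id

/-- The directed edge relation of the digraph `G_n`: `(a,b)` is an edge iff there is a `k ≥ 1`
with `a_{k+N} = 1`, `a_k = ⋯ = a_{k+N-1} = 0`, `b_{k+N} = 0`, `b_k = ⋯ = b_{k+N-1} = 1`, and
`a_t = b_t` for all `t ∉ {k, …, k+N}`. -/
def Edge (N : ℕ) (F G : Finset ℕ) : Prop :=
  ∃ k, 1 ≤ k ∧ (k + N) ∈ F ∧ (∀ i ∈ Finset.Ico k (k + N), i ∉ F) ∧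
    (k + N) ∉ G ∧ (∀ i ∈ Finset.Ico k (k + N), i ∈ G) ∧
    (∀ t, t ∉ Finset.Icc k (k + N) → (t ∈ F ↔ t ∈ G))

/-- The partial order of the poset `P_n`: `a ≥ b` iff `b` is reachable from `a` by a
(possibly empty) directed path of edges. -/
def pge (N : ℕ) : Finset ℕ → Finset ℕ → Prop := Relation.ReflTransGen (Edge N)

/-- `A_{k,0} = A_k + Σ_{1 ≤ i < k-N-1, N∤i} A_{k-N-1-i}`. -/
def Ak0 (N : ℕ) (A : ℕ → ℕ) (k : ℕ) : ℕ :=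
  A k + ∑ i ∈ (Finset.Ico 1 (k - N - 1)).filter (fun i => ¬ N ∣ i), A (k - N - 1 - i)

/-- `A_{k,1} = A_k + Σ_{1 ≤ i < k-N, N∤i} A_{k-N-i}`. -/
def Ak1 (N : ℕ) (A : ℕ → ℕ) (k : ℕ) : ℕ :=
  A k + ∑ i ∈ (Finset.Ico 1 (k - N)).filter (fun i => ¬ N ∣ i), A (k - N - i)

/-- `A_{k,2} = A_k + Σ_{1 ≤ i < k-N+1, N∤i} A_{k-N+1-i}`. -/
def Ak2 (N : ℕ) (A : ℕ → ℕ) (k : ℕ) : ℕ :=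
  A k + ∑ i ∈ (Finset.Ico 1 (k - N + 1)).filter (fun i => ¬ N ∣ i), A (k - N + 1 - i)

/-! The recurrence with `N ≥ 2` gives `A i + A (i + 1) ≤ A (i + 2)` from the point where it
applies, and the initial condition covers the indices before it. Hence `A` is strictly increasing
on `i ≥ 1` and `A 1 + ⋯ + A m < A (m + 2)`. A representation of `n` of length `l` then satisfies
`A l ≤ n < A (l + 2)`, which pins `l` to `k - 1` or `k` when `A k ≤ n < A (k + 1)`. -/

open Finset

namespace QuasiFib

variable {N : ℕ} {A : ℕ → ℕ}

lemma add_le_of_le_add_one (hN : 2 ≤ N) (hA : QuasiFib N A) {i : ℕ} (hi : N ≤ i + 1) :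
    A i + A (i + 1) ≤ A (i + 2) := by
  have hrec := hA.2.1 (i + 2 - N) (by omega)
  rw [show i + 2 - N + N - 1 = i + 1 by omega, show i + 2 - N + N = i + 2 by omega] at hrec
  rw [hrec, ← sum_pair (f := A) (show i ≠ i + 1 by omega)]
  exact sum_le_sum_of_subset (by intro j; simp only [mem_insert, mem_singleton, mem_Icc]; omega)

lemma lt_add_one (hN : 2 ≤ N) (hA : QuasiFib N A) {i : ℕ} (hi : 1 ≤ i) : A i < A (i + 1) := by
  obtain ⟨j, rfl⟩ : ∃ j, i = j + 1 := ⟨i - 1, by omega⟩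
  show A (j + 1) < A (j + 2)
  by_cases hj : N ≤ j + 1
  · have := add_le_of_le_add_one hN hA hj
    have := hA.1 j (by omega)
    omega
  · calc A (j + 1) ≤ ∑ i ∈ Icc 1 (j + 1), A i := single_le_sum (by simp) (by simp)
      _ < A (j + 2) := by simpa using hA.2.2 (j + 2) (by omega) (by omega)

lemma strictMonoOn (hN : 2 ≤ N) (hA : QuasiFib N A) : StrictMonoOn A (Set.Ici 1) :=
  strictMonoOn_of_lt_add_one Set.ordConnected_Ici fun _ _ hi _ => hA.lt_add_one hN hi

lemma sum_Icc_lt (hN : 2 ≤ N) (hA : QuasiFib N A) (m : ℕ) :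
    ∑ i ∈ Icc 1 m, A i < A (m + 2) := by
  induction m with
  | zero => simpa using hA.1 2 (by omega)
  | succ m ih =>
    show ∑ i ∈ Icc 1 (m + 1), A i < A (m + 3)
    by_cases hm : N ≤ m + 2
    · have : A (m + 1) + A (m + 2) ≤ A (m + 3) := add_le_of_le_add_one hN hA hm
      rw [sum_Icc_succ_top (by omega)]
      omega
    · calc ∑ i ∈ Icc 1 (m + 1), A i ≤ ∑ i ∈ Icc 1 (m + 2), A i :=
            sum_le_sum_of_subset (Icc_subset_Icc_right (by omega))
        _ < A (m + 3) := by simpa using hA.2.2 (m + 3) (by omega) (by omega)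

end QuasiFib

lemma le_len_of_mem {F : Finset ℕ} {i : ℕ} (hi : i ∈ F) : i ≤ len F :=
  le_sup (f := id) hi

lemma len_mem {F : Finset ℕ} (hF : F.Nonempty) : len F ∈ F := by
  obtain ⟨_, _, hsup⟩ := exists_mem_eq_sup F hF id
  rwa [len, hsup]

lemma sum_lt_len_add_two {N : ℕ} {A : ℕ → ℕ} (hN : 2 ≤ N) (hA : QuasiFib N A) {F : Finset ℕ}
    (hF : ∀ i ∈ F, 1 ≤ i) : ∑ i ∈ F, A i < A (len F + 2) :=
  calc ∑ i ∈ F, A i ≤ ∑ i ∈ Icc 1 (len F), A i :=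
        sum_le_sum_of_subset fun i hi => mem_Icc.2 ⟨hF i hi, le_len_of_mem hi⟩
    _ < A (len F + 2) := hA.sum_Icc_lt hN _

/-- Lemma 2.1(2): if `A_k ≤ n < A_{k+1}` then every `a ∈ S_n` has length `l(a) ∈ {k-1, k}`. -/
theorem stmt_2 (N : ℕ) (hN : 2 ≤ N) (A : ℕ → ℕ) (hA : QuasiFib N A)
    (k n : ℕ) (hk : 1 ≤ k) (h1 : A k ≤ n) (h2 : n < A (k + 1))
    (F : Finset ℕ) (hF : F ∈ SRep A n) :
    len F = k - 1 ∨ len F = k := by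
  obtain ⟨hpos, rfl⟩ := hF
  have hne : F.Nonempty := nonempty_iff_ne_empty.2 fun h => by
    have := hA.1 k hk
    simp only [h, sum_empty] at h1
    omega
  have hlen : 1 ≤ len F := hpos _ (len_mem hne)
  have hupper : len F < k + 1 := by
    refine (hA.strictMonoOn hN).lt_iff_lt hlen (by simp) |>.1 (lt_of_le_of_lt ?_ h2)
    exact single_le_sum (fun _ _ => Nat.zero_le _) (len_mem hne)
  have hlower : k < len F + 2 :=
    (hA.strictMonoOn hN).lt_iff_lt hk (by simp) |>.1
      (lt_of_le_of_lt h1 (sum_lt_len_add_two hN hA hpos))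
  omega
end

section
/- Let A_1, A_2, … be a quasifibonacci sequence of level N. If k ≥ 1 and n is an integer with A_1 + A_2 + ⋯ + A_{k−1} < n < A_{k+1}, then every a ∈ S_n has length l(a) = k. -/
lemma qf_step (N : ℕ) (hN : 2 ≤ N) (A : ℕ → ℕ) (hA : QuasiFib N A) :
    ∀ i, 1 ≤ i → A i < A (i + 1) := by
  obtain ⟨hpos, hrec, hinit⟩ := hA
  intro i hi
  rcases le_or_gt (i + 1) N with h | h
  · calc A i ≤ ∑ j ∈ Finset.Icc 1 ((i + 1) - 1), A j := by
          apply Finset.single_le_sum (f := A) (fun j _ => Nat.zero_le _)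
          simp; omega
      _ < A (i + 1) := hinit _ (by omega) h
  · have hiN : N ≤ i := by omega
    have h1 : 1 ≤ i + 1 - N := by omega
    have := hrec (i + 1 - N) h1
    have he : i + 1 - N + N = i + 1 := by omega
    rw [he] at this
    rw [this]
    have hmem : i ∈ Finset.Icc (i + 1 - N) (i + 1 - 1) := by simp; omega
    have hmem' : i - 1 ∈ Finset.Icc (i + 1 - N) (i + 1 - 1) := by simp; omega
    calc A i < A i + A (i - 1) := by
          have := hpos (i - 1) (by omega); omega
      _ ≤ ∑ j ∈ Finset.Icc (i + 1 - N) (i + 1 - 1), A j := by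
          have := Finset.add_sum_erase _ A hmem
          rw [← this]
          have hmem'' : i - 1 ∈ (Finset.Icc (i + 1 - N) (i + 1 - 1)).erase i := by
            simp; omega
          have := Finset.single_le_sum (f := A) (fun j _ => Nat.zero_le _) hmem''
          omega

lemma qf_mono (N : ℕ) (hN : 2 ≤ N) (A : ℕ → ℕ) (hA : QuasiFib N A) :
    ∀ a b, 1 ≤ a → a ≤ b → A a ≤ A b := by
  intro a b ha hab
  induction b with
  | zero => omega
  | succ m ih =>
    rcases le_or_gt a m with h | h
    · exact le_trans (ih h) (le_of_lt (qf_step N hN A hA m (by omega)))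
    · have : a = m + 1 := by omega
      rw [this]

/-- Lemma 2.1(3): if `A_1 + A_2 + ⋯ + A_{k-1} < n < A_{k+1}` then every `a ∈ S_n` has
length `l(a) = k`. -/
theorem stmt_3 (N : ℕ) (hN : 2 ≤ N) (A : ℕ → ℕ) (hA : QuasiFib N A)
    (k n : ℕ) (hk : 1 ≤ k) (h1 : (∑ i ∈ Finset.Icc 1 (k - 1), A i) < n) (h2 : n < A (k + 1))
    (F : Finset ℕ) (hF : F ∈ SRep A n) :
    len F = k := by
  obtain ⟨hFpos, hFsum⟩ := hF
  have hn0 : 0 < n := by omega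
  have hne : F.Nonempty := by
    rcases F.eq_empty_or_nonempty with h | h
    · rw [h] at hFsum; simp at hFsum; omega
    · exact h
  obtain ⟨m, hmF, hm⟩ := Finset.exists_mem_eq_sup F hne id
  have hlen : len F = m := hm
  rcases lt_trichotomy m k with h | h | h
  · exfalso
    have hsub : F ⊆ Finset.Icc 1 (k - 1) := by
      intro i hi
      have h1i := hFpos i hi
      have : i ≤ m := by
        have := Finset.le_sup (f := id) hi
        simp only [id] at this hm
        omega
      simp; omega
    have := Finset.sum_le_sum_of_subset (f := A) hsub
    omega
  · omega
  · exfalso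
    have hAm : A m ≤ n := by
      rw [← hFsum]
      exact Finset.single_le_sum (f := A) (fun j _ => Nat.zero_le _) hmF
    have : A (k + 1) ≤ A m := qf_mono N hN A hA (k + 1) m (by omega) (by omega)
    omega
end

section
/- Let A_1, A_2, … be a quasifibonacci sequence of level N. For every k ≥ 1, Σ_{1≤i≤k−1, N∤i} A_{k−i} < A_k, i.e., the sum of A_{k−i} over all indices i with 1 ≤ i ≤ k−1 that are not divisible by N is strictly less than A_k. -/
/-- Lemma 2.1(4): `Σ_{1 ≤ i ≤ k-1, N∤i} A_{k-i} < A_k`. -/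
theorem stmt_4 (N : ℕ) (hN : 2 ≤ N) (A : ℕ → ℕ) (hA : QuasiFib N A)
    (k : ℕ) (hk : 1 ≤ k) :
    (∑ i ∈ (Finset.Icc 1 (k - 1)).filter (fun i => ¬ N ∣ i), A (k - i)) < A k := by
  induction k using Nat.strong_induction_on with
  | _ k ih =>
  obtain ⟨hpos, hrec, hbase⟩ := hA
  by_cases hkN : k ≤ N
  · calc (∑ i ∈ (Finset.Icc 1 (k - 1)).filter (fun i => ¬ N ∣ i), A (k - i))
        ≤ ∑ i ∈ Finset.Icc 1 (k - 1), A (k - i) :=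
          Finset.sum_le_sum_of_subset (Finset.filter_subset _ _)
      _ = ∑ i ∈ Finset.Icc 1 (k - 1), A i := by
          apply Finset.sum_nbij' (fun i => k - i) (fun i => k - i) <;>
            (intro a ha; simp only [Finset.mem_Icc] at *) <;> omega
      _ < A k := hbase k hk hkN
  · push_neg at hkN
    set m := k - N with hm
    have hm1 : 1 ≤ m := by omega
    have hkm : k = m + N := by omega
    have ihm := ih m (by omega) hm1
    have hIcc : ∀ n : ℕ, 1 ≤ n → Finset.Icc 1 (n - 1) = Finset.Ico 1 n := by
      intro n hn; rw [← Finset.Ico_add_one_right_eq_Icc]; congr 1; omega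
    have hfe : ∀ n : ℕ, 1 ≤ n →
        (∑ i ∈ (Finset.Icc 1 (n - 1)).filter (fun i => ¬ N ∣ i), A (n - i))
        = ∑ i ∈ Finset.Ico 1 n, if ¬ N ∣ i then A (n - i) else 0 := by
      intro n hn; rw [Finset.sum_filter, hIcc n hn]
    rw [hfe k hk]
    rw [hfe m hm1] at ihm
    have hsplit : (∑ i ∈ Finset.Ico 1 N, if ¬ N ∣ i then A (k - i) else 0)
        + (∑ i ∈ Finset.Ico N k, if ¬ N ∣ i then A (k - i) else 0)
        = ∑ i ∈ Finset.Ico 1 k, if ¬ N ∣ i then A (k - i) else 0 :=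
      Finset.sum_Ico_consecutive _ (by omega) (by omega)
    -- first chunk
    have h1 : (∑ i ∈ Finset.Ico 1 N, if ¬ N ∣ i then A (k - i) else 0)
        = ∑ j ∈ Finset.Ico (m + 1) (m + N), A j := by
      rw [Finset.sum_congr rfl (fun i hi => by
        rw [if_pos]; simp only [Finset.mem_Ico] at hi
        exact fun hd => by have := Nat.le_of_dvd (by omega) hd; omega)]
      apply Finset.sum_nbij' (fun i => k - i) (fun j => k - j) <;>
        (intro a ha; simp only [Finset.mem_Ico] at *) <;> omega
    -- second chunk
    have h2 : (∑ i ∈ Finset.Ico N k, if ¬ N ∣ i then A (k - i) else 0)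
        = ∑ i ∈ Finset.Ico 1 m, if ¬ N ∣ i then A (m - i) else 0 := by
      rw [Finset.sum_Ico_eq_sum_range]
      have : ∀ j ∈ Finset.range (k - N),
          (if ¬ N ∣ (N + j) then A (k - (N + j)) else 0)
          = (if ¬ N ∣ j then A (m - j) else 0) := by
        intro j hj
        have hd : N ∣ (N + j) ↔ N ∣ j := ⟨fun h => (Nat.dvd_add_right (dvd_refl N)).mp h,
          fun h => Dvd.dvd.add (dvd_refl N) h⟩
        have hv : k - (N + j) = m - j := by omega
        simp only [hd, hv]
      rw [Finset.sum_congr rfl this]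
      have hr : k - N = m := rfl
      rw [hr, Finset.range_eq_Ico, Finset.sum_eq_sum_Ico_succ_bot (by omega : 0 < m)]
      simp
    -- A k expansion
    have hAk : A k = A m + ∑ j ∈ Finset.Ico (m + 1) (m + N), A j := by
      rw [hkm, hrec m hm1]
      rw [show Finset.Icc m (m + N - 1) = Finset.Ico m (m + N) from by
        rw [← Finset.Ico_add_one_right_eq_Icc]; congr 1; omega]
      rw [Finset.sum_eq_sum_Ico_succ_bot (by omega : m < m + N)]
    omega
end

section
/- Let A_1, A_2, … be a quasifibonacci sequence of level N, let k ≥ 1, and let n be a positive integer with n > Σ_{1≤i≤k−1, N∤i} A_{k−i} (the sum being over indices i with 1 ≤ i ≤ k−1 not divisible by N). If S_n is nonempty, then n ≥ A_k. -/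
namespace QFAux

variable {N : ℕ} {A : ℕ → ℕ}

lemma step (hN : 2 ≤ N) (hA : QuasiFib N A) : ∀ m, 1 ≤ m → A m < A (m + 1) := by
  obtain ⟨hpos, hrec, hinit⟩ := hA
  intro m hm
  rcases le_or_gt (m + 1) N with h | h
  · have h1 := hinit (m + 1) (by omega) h
    have h2 : A m ≤ ∑ i ∈ Finset.Icc 1 (m + 1 - 1), A i := by
      apply Finset.single_le_sum (fun i _ => Nat.zero_le _)
      simp only [Finset.mem_Icc]; omega
    omega
  · have hs : 1 ≤ m + 1 - N := by omega
    have hr := hrec (m + 1 - N) hs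
    have he : m + 1 - N + N = m + 1 := by omega
    rw [he] at hr
    have he2 : m + 1 - 1 = m := by omega
    rw [he2] at hr
    have hsplit : ∑ i ∈ Finset.Icc (m + 1 - N) m, A i
        = ∑ i ∈ Finset.Icc (m + 1 - N) (m - 1), A i + A m := by
      have hm1 : m = (m - 1) + 1 := by omega
      rw [hm1, Finset.sum_Icc_succ_top (by omega)]
      congr 1 <;> omega
    have hposu : 0 < ∑ i ∈ Finset.Icc (m + 1 - N) (m - 1), A i := by
      have hmem : (m + 1 - N) ∈ Finset.Icc (m + 1 - N) (m - 1) := by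
        simp only [Finset.mem_Icc]; omega
      calc 0 < A (m + 1 - N) := hpos _ hs
        _ ≤ _ := Finset.single_le_sum (fun i _ => Nat.zero_le _) hmem
    omega

lemma mono (hN : 2 ≤ N) (hA : QuasiFib N A) {a b : ℕ} (ha : 1 ≤ a) (hab : a ≤ b) :
    A a ≤ A b := by
  induction b, hab using Nat.le_induction with
  | base => exact le_refl _
  | succ b hb ih => exact le_trans ih (le_of_lt (step hN hA b (by omega)))

/-- key bound: `∑_{j ∈ [1,s], N ∣ s-j} A j < A (s+1)` -/
lemma keybound (hN : 2 ≤ N) (hA : QuasiFib N A) :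
    ∀ s, (∑ j ∈ (Finset.Icc 1 s).filter (fun j => N ∣ (s - j)), A j) < A (s + 1) := by
  intro s
  induction s using Nat.strong_induction_on with
  | _ s IH =>
  obtain ⟨hpos, hrec, hinit⟩ := hA
  rcases Nat.eq_zero_or_pos s with hs0 | hs1
  · subst hs0; simp [hpos 1 le_rfl]
  rcases le_or_gt (s + 1) N with h | h
  · have h1 := hinit (s + 1) (by omega) h
    have he2 : s + 1 - 1 = s := by omega
    rw [he2] at h1
    calc (∑ j ∈ (Finset.Icc 1 s).filter (fun j => N ∣ (s - j)), A j)
        ≤ ∑ j ∈ Finset.Icc 1 s, A j :=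
          Finset.sum_le_sum_of_subset (Finset.filter_subset _ _)
      _ < A (s + 1) := h1
  · -- s ≥ N
    have hsN : N ≤ s := by omega
    have hself : s ∈ (Finset.Icc 1 s).filter (fun j => N ∣ (s - j)) := by
      simp only [Finset.mem_filter, Finset.mem_Icc]
      exact ⟨⟨hs1, le_rfl⟩, by simp⟩
    have herase : ((Finset.Icc 1 s).filter (fun j => N ∣ (s - j))).erase s
        = (Finset.Icc 1 (s - N)).filter (fun j => N ∣ (s - N - j)) := by
      ext j
      simp only [Finset.mem_erase, Finset.mem_filter, Finset.mem_Icc]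
      constructor
      · rintro ⟨hne, ⟨hj1, hj2⟩, hdvd⟩
        have hd1 : 1 ≤ s - j := by omega
        have hge : N ≤ s - j := Nat.le_of_dvd (by omega) hdvd
        obtain ⟨c, hc⟩ := hdvd
        have hc0 : c ≠ 0 := by rintro rfl; omega
        obtain ⟨c', rfl⟩ := Nat.exists_eq_succ_of_ne_zero hc0
        rw [Nat.mul_succ] at hc
        exact ⟨⟨hj1, by omega⟩, ⟨c', by omega⟩⟩
      · rintro ⟨⟨hj1, hj2⟩, c, hc⟩
        have hc2 : s - j = N * (c + 1) := by rw [Nat.mul_succ]; omega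
        exact ⟨by omega, ⟨hj1, by omega⟩, ⟨c + 1, hc2⟩⟩
    have hsum : (∑ j ∈ (Finset.Icc 1 s).filter (fun j => N ∣ (s - j)), A j)
        = A s + ∑ j ∈ (Finset.Icc 1 (s - N)).filter (fun j => N ∣ (s - N - j)), A j := by
      rw [← Finset.add_sum_erase _ _ hself, herase]
    have hIH := IH (s - N) (by omega)
    have hr := hrec (s + 1 - N) (by omega)
    have he : s + 1 - N + N = s + 1 := by omega
    rw [he] at hr
    have he2 : s + 1 - 1 = s := by omega
    rw [he2] at hr
    have hge : A (s + 1 - N) + A s ≤ A (s + 1) := by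
      rw [hr]
      have hsplit : ∑ i ∈ Finset.Icc (s + 1 - N) s, A i
          = ∑ i ∈ Finset.Icc (s + 1 - N) (s - 1), A i + A s := by
        have hs2 : s = (s - 1) + 1 := by omega
        rw [hs2, Finset.sum_Icc_succ_top (by omega)]
        congr 1 <;> omega
      have hmem : (s + 1 - N) ∈ Finset.Icc (s + 1 - N) (s - 1) := by
        simp only [Finset.mem_Icc]; omega
      have := Finset.single_le_sum (fun i (_ : i ∈ Finset.Icc (s + 1 - N) (s - 1)) =>
        Nat.zero_le (A i)) hmem
      omega
    have heq : s - N + 1 = s + 1 - N := by omega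
    rw [heq] at hIH
    omega

/-- the main lemma -/
lemma main (hN : 2 ≤ N) (hA : QuasiFib N A) :
    ∀ k, 1 ≤ k → ∀ F : Finset ℕ, F ⊆ Finset.Icc 1 (k - 1) → (∑ i ∈ F, A i) < A k →
      (∑ i ∈ F, A i) ≤ ∑ j ∈ (Finset.Icc 1 (k - 1)).filter (fun j => ¬ N ∣ (k - j)), A j := by
  intro k
  induction k using Nat.strong_induction_on with
  | _ k IH =>
  intro hk F hF hlt
  rcases le_or_gt k N with h | h
  · -- base: no excluded indices
    have hfull : (Finset.Icc 1 (k - 1)).filter (fun j => ¬ N ∣ (k - j)) = Finset.Icc 1 (k - 1) := by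
      apply Finset.filter_true_of_mem
      intro j hj
      simp only [Finset.mem_Icc] at hj
      intro hdvd
      have h1 : 1 ≤ k - j := by omega
      have := Nat.le_of_dvd (by omega) hdvd
      omega
    rw [hfull]
    exact Finset.sum_le_sum_of_subset hF
  · obtain ⟨hpos, hrec, hinit⟩ := hA
    set s := k - N with hsdef
    have hs1 : 1 ≤ s := by omega
    have hrk := hrec s hs1
    have he : s + N = k := by omega
    rw [he] at hrk
    have hAk : A k = ∑ i ∈ Finset.Icc s (k - 1), A i := hrk
    by_cases hsub : Finset.Icc s (k - 1) ⊆ F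
    · exfalso
      have : A k ≤ ∑ i ∈ F, A i := by
        rw [hAk]; exact Finset.sum_le_sum_of_subset hsub
      omega
    · -- largest missing element j0 of the window
      have hne : ((Finset.Icc s (k - 1)).filter (fun j => j ∉ F)).Nonempty := by
        rw [Finset.filter_nonempty_iff]
        by_contra hc
        push_neg at hc
        exact hsub fun x hx => hc x hx
      set D := (Finset.Icc s (k - 1)).filter (fun j => j ∉ F) with hD
      set j0 := D.max' hne with hj0
      have hj0D : j0 ∈ D := D.max'_mem hne
      have hj0w : s ≤ j0 ∧ j0 ≤ k - 1 := by
        have := hj0D; rw [hD, Finset.mem_filter, Finset.mem_Icc] at this; exact this.1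
      have hj0F : j0 ∉ F := by
        have := hj0D; rw [hD, Finset.mem_filter] at this; exact this.2
      have hmax : ∀ j, s ≤ j → j ≤ k - 1 → j ∉ F → j ≤ j0 := by
        intro j h1 h2 h3
        exact D.le_max' j (by rw [hD, Finset.mem_filter, Finset.mem_Icc]; exact ⟨⟨h1, h2⟩, h3⟩)
      -- upper part of F equals Icc (j0+1) (k-1)
      have hH : F.filter (fun j => j0 < j) = Finset.Icc (j0 + 1) (k - 1) := by
        ext j
        simp only [Finset.mem_filter, Finset.mem_Icc]
        constructor
        · rintro ⟨hjF, hj⟩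
          have := hF hjF
          rw [Finset.mem_Icc] at this
          exact ⟨by omega, this.2⟩
        · rintro ⟨h1, h2⟩
          refine ⟨?_, by omega⟩
          by_contra hjF
          have := hmax j (by omega) h2 hjF
          omega
      set G := F.filter (fun j => ¬ j0 < j) with hG
      set C := ∑ i ∈ Finset.Icc (j0 + 1) (k - 1), A i with hC
      have hsplitF : ∑ i ∈ F, A i = C + ∑ i ∈ G, A i := by
        rw [hC, ← hH, hG]
        rw [Finset.sum_filter_add_sum_filter_not F (fun j => j0 < j) A]
      -- G ⊆ Icc 1 (j0 - 1)
      have hGsub : G ⊆ Finset.Icc 1 (j0 - 1) := by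
        intro j hj
        rw [hG, Finset.mem_filter] at hj
        obtain ⟨hjF, hj2⟩ := hj
        have := hF hjF
        rw [Finset.mem_Icc] at this ⊢
        have : j ≠ j0 := by rintro rfl; exact hj0F hjF
        have h1 := hF hjF
        rw [Finset.mem_Icc] at h1
        omega
      -- split RHS
      have hRHSsplit : (Finset.Icc 1 (k - 1)).filter (fun j => ¬ N ∣ (k - j))
          = (Finset.Icc 1 j0).filter (fun j => ¬ N ∣ (k - j))
            ∪ (Finset.Icc (j0 + 1) (k - 1)).filter (fun j => ¬ N ∣ (k - j)) := by
        rw [← Finset.filter_union]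
        congr 1
        ext j
        simp only [Finset.mem_union, Finset.mem_Icc]
        omega
      have hdisj : Disjoint ((Finset.Icc 1 j0).filter (fun j => ¬ N ∣ (k - j)))
          ((Finset.Icc (j0 + 1) (k - 1)).filter (fun j => ¬ N ∣ (k - j))) := by
        apply Finset.disjoint_filter_filter
        rw [Finset.disjoint_left]
        intro j hj1 hj2
        rw [Finset.mem_Icc] at hj1 hj2
        omega
      have hupper : (Finset.Icc (j0 + 1) (k - 1)).filter (fun j => ¬ N ∣ (k - j))
          = Finset.Icc (j0 + 1) (k - 1) := by
        apply Finset.filter_true_of_mem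
        intro j hj
        rw [Finset.mem_Icc] at hj
        intro hdvd
        have h1 : 1 ≤ k - j := by omega
        have h2 : k - j ≤ N - 1 := by omega
        have := Nat.le_of_dvd (by omega) hdvd
        omega
      set R1 := ∑ j ∈ (Finset.Icc 1 j0).filter (fun j => ¬ N ∣ (k - j)), A j with hR1
      have hT : (∑ j ∈ (Finset.Icc 1 (k - 1)).filter (fun j => ¬ N ∣ (k - j)), A j)
          = R1 + C := by
        rw [hRHSsplit, Finset.sum_union hdisj, hupper]
      rw [hT, hsplitF]
      have hmainG : (∑ i ∈ G, A i) ≤ R1 := by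
        rcases eq_or_lt_of_le hj0w.1 with heq0 | hlt0
        · -- j0 = s
          have hGsub' : G ⊆ Finset.Icc 1 (s - 1) := by rw [heq0]; exact hGsub
          have hAkC : A k = A j0 + C := by
            rw [hAk, hC, heq0]
            have hins : Finset.Icc j0 (k - 1) = insert j0 (Finset.Icc (j0 + 1) (k - 1)) := by
              ext j
              simp only [Finset.mem_insert, Finset.mem_Icc]
              omega
            rw [hins, Finset.sum_insert (by simp only [Finset.mem_Icc]; omega)]
          have hGlt : (∑ i ∈ G, A i) < A s := by rw [heq0]; omega
          have hIHs := IH s (by omega) hs1 G hGsub' hGlt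
          have hseteq : (Finset.Icc 1 (s - 1)).filter (fun j => ¬ N ∣ (s - j))
              = (Finset.Icc 1 j0).filter (fun j => ¬ N ∣ (k - j)) := by
            rw [← heq0]
            ext j
            simp only [Finset.mem_filter, Finset.mem_Icc]
            constructor
            · rintro ⟨⟨h1, h2⟩, h3⟩
              refine ⟨⟨h1, by omega⟩, ?_⟩
              intro hdvd
              have hkj : k - j = (s - j) + N := by omega
              rw [hkj, Nat.dvd_add_self_right] at hdvd
              exact h3 hdvd
            · rintro ⟨⟨h1, h2⟩, h3⟩
              have hjs : j ≠ s := by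
                intro hjeq
                apply h3
                have hkj : k - j = N := by omega
                rw [hkj]
              refine ⟨⟨h1, by omega⟩, ?_⟩
              intro hdvd
              apply h3
              have hkj : k - j = (s - j) + N := by omega
              rw [hkj, Nat.dvd_add_self_right]
              exact hdvd
          rw [hseteq] at hIHs
          exact hIHs
        · -- j0 > s
          set E := (Finset.Icc 1 j0).filter (fun j => N ∣ (k - j)) with hE
          have hEeq : E = (Finset.Icc 1 s).filter (fun j => N ∣ (s - j)) := by
            rw [hE]
            ext j
            simp only [Finset.mem_filter, Finset.mem_Icc]
            constructor
            · rintro ⟨⟨h1, h2⟩, hdvd⟩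
              have hk1 : 1 ≤ k - j := by omega
              have hge := Nat.le_of_dvd (by omega) hdvd
              have hjs : j ≤ s := by omega
              have hkj : k - j = (s - j) + N := by omega
              rw [hkj, Nat.dvd_add_self_right] at hdvd
              exact ⟨⟨h1, hjs⟩, hdvd⟩
            · rintro ⟨⟨h1, h2⟩, hdvd⟩
              have hkj : k - j = (s - j) + N := by omega
              refine ⟨⟨h1, by omega⟩, ?_⟩
              rw [hkj, Nat.dvd_add_self_right]
              exact hdvd
          have hEbound : (∑ j ∈ E, A j) < A j0 := by
            calc (∑ j ∈ E, A j) < A (s + 1) := by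
                  rw [hEeq]; exact keybound hN ⟨hpos, hrec, hinit⟩ s
              _ ≤ A j0 := mono hN ⟨hpos, hrec, hinit⟩ (by omega) (by omega)
          have htot : (∑ j ∈ E, A j) + R1 = ∑ j ∈ Finset.Icc 1 j0, A j := by
            rw [hE, hR1]
            exact Finset.sum_filter_add_sum_filter_not (Finset.Icc 1 j0) (fun j => N ∣ (k - j)) A
          have hlow : ∑ j ∈ Finset.Icc 1 j0, A j
              = ∑ j ∈ Finset.Icc 1 (j0 - 1), A j + A j0 := by
            have hj01 : j0 = (j0 - 1) + 1 := by omega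
            rw [hj01, Finset.sum_Icc_succ_top (by omega)]
            congr 1 <;> omega
          have hGle : (∑ i ∈ G, A i) ≤ ∑ j ∈ Finset.Icc 1 (j0 - 1), A j :=
            Finset.sum_le_sum_of_subset hGsub
          omega
      omega

end QFAux

/-- Corollary 3.2: if `n > Σ_{1 ≤ i ≤ k-1, N∤i} A_{k-i}` and `S_n ≠ ∅`, then `n ≥ A_k`. -/
theorem stmt_8 (N : ℕ) (hN : 2 ≤ N) (A : ℕ → ℕ) (hA : QuasiFib N A)
    (k n : ℕ) (hk : 1 ≤ k) (hn : 1 ≤ n)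
    (h : (∑ i ∈ (Finset.Icc 1 (k - 1)).filter (fun i => ¬ N ∣ i), A (k - i)) < n)
    (hne : (SRep A n).Nonempty) :
    A k ≤ n := by
  obtain ⟨F, hF⟩ := hne
  obtain ⟨hF1, hF2⟩ := hF
  by_contra hcon
  push_neg at hcon
  have hFsub : F ⊆ Finset.Icc 1 (k - 1) := by
    intro j hj
    rw [Finset.mem_Icc]
    refine ⟨hF1 j hj, ?_⟩
    by_contra hjk
    push_neg at hjk
    have h1 : A k ≤ A j := QFAux.mono hN hA hk (by omega)
    have h2 : A j ≤ ∑ i ∈ F, A i := Finset.single_le_sum (fun i _ => Nat.zero_le _) hj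
    omega
  have hmain := QFAux.main hN hA k hk F hFsub (by omega)
  have hre : (∑ i ∈ (Finset.Icc 1 (k - 1)).filter (fun i => ¬ N ∣ i), A (k - i))
      = ∑ j ∈ (Finset.Icc 1 (k - 1)).filter (fun j => ¬ N ∣ (k - j)), A j := by
    apply Finset.sum_nbij' (i := fun a => k - a) (j := fun a => k - a)
    · intro a ha
      simp only [Finset.mem_filter, Finset.mem_Icc] at ha ⊢
      refine ⟨⟨by omega, by omega⟩, ?_⟩
      have hkka : k - (k - a) = a := by omega
      rw [hkka]
      exact ha.2
    · intro a ha
      simp only [Finset.mem_filter, Finset.mem_Icc] at ha ⊢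
      have hka : 1 ≤ k - a ∧ k - a ≤ k - 1 := by omega
      exact ⟨⟨hka.1, hka.2⟩, ha.2⟩
    · intro a ha
      simp only [Finset.mem_filter, Finset.mem_Icc] at ha
      omega
    · intro a ha
      simp only [Finset.mem_filter, Finset.mem_Icc] at ha
      omega
    · intro a ha
      rfl
  omega
end

section
/- Let A_1, A_2, … be a quasifibonacci sequence of level N, let k ≥ N+1, and let n satisfy A_{k,2} < n < A_{k+1}. Then every a ∈ S_n has l(a) = k (in particular a_k = 1), and the map a ↦ a − τ_k (setting the k-th entry to 0) is a bijection from S_n onto S_{n−A_k} such that (a,b) is an edge in G_n if and only if (a−τ_k, b−τ_k) is an edge in G_{n−A_k}; i.e., P_n is isomorphic to P_{n−A_k} and P_n = P_{n−A_k} + τ_k. -/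
open Finset

/-!
Since `A` is increasing from index `1` on and `A (k+1) ≤ 2 A k`, every part of a representation of
`n < A (k+1)` is at most `k`, and every part of a representation of `n - A k < A k` is below `k`.
The part `k` is forced because `A 1 + ⋯ + A (k-1) ≤ A_{k,2} < n`: the left side is
`A k + A 1 + ⋯ + A (k-N-1)`, and in the reflected sum defining `A_{k,2}` the omitted terms
`A (k-N) + A (k-2N) + ⋯` are dominated by `A (k-N)`, by iterating `A t + A (t+1) ≤ A (t+N)`.
Finally, no position of the window `[j, j+N]` of an edge belongs to both endpoints, so deleting a
common part `k` neither creates nor destroys edges.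
-/

section
variable {N : ℕ} {A : ℕ → ℕ}

theorem QuasiFib.eq_sum_Ico (hA : QuasiFib N A) {k : ℕ} (hk : N + 1 ≤ k) :
    A k = ∑ i ∈ Ico (k - N) k, A i := by
  have h := hA.2.1 (k - N) (by omega)
  rw [Nat.sub_add_cancel (by omega : N ≤ k)] at h
  rw [h]
  congr 1
  ext i
  simp only [mem_Icc, mem_Ico]
  omega

theorem QuasiFib.le_succ (hN : 1 ≤ N) (hA : QuasiFib N A) {i : ℕ} (hi : 1 ≤ i) :
    A i ≤ A (i + 1) := by
  by_cases hiN : i + 1 ≤ N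
  · calc A i ≤ ∑ j ∈ Icc 1 (i + 1 - 1), A j :=
          single_le_sum (fun _ _ => Nat.zero_le _) (by simp; omega)
      _ ≤ A (i + 1) := (hA.2.2 (i + 1) (by omega) hiN).le
  · rw [hA.eq_sum_Ico (k := i + 1) (by omega)]
    exact single_le_sum (fun _ _ => Nat.zero_le _) (by simp; omega)

theorem QuasiFib.monotoneOn (hN : 1 ≤ N) (hA : QuasiFib N A) : MonotoneOn A (Set.Ici 1) :=
  monotoneOn_nat_Ici_of_le_succ fun _ hi => hA.le_succ hN hi

theorem QuasiFib.add_succ_le (hN : 2 ≤ N) (hA : QuasiFib N A) {i : ℕ} (hi : 1 ≤ i) :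
    A i + A (i + 1) ≤ A (i + N) := by
  rw [hA.eq_sum_Ico (k := i + N) (by omega), Nat.add_sub_cancel,
    ← sum_pair (by omega : i ≠ i + 1)]
  exact sum_le_sum_of_subset (by intro j; simp; omega)

theorem QuasiFib.succ_le_two_mul (hN : 1 ≤ N) (hA : QuasiFib N A) {k : ℕ} (hk : N + 1 ≤ k) :
    A (k + 1) ≤ 2 * A k := by
  have hAk := hA.eq_sum_Ico hk
  rw [hA.eq_sum_Ico (k := k + 1) (by omega), sum_Ico_succ_top (by omega)]
  have : ∑ i ∈ Ico (k + 1 - N) k, A i ≤ ∑ i ∈ Ico (k - N) k, A i :=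
    sum_le_sum_of_subset (Ico_subset_Ico_left (by omega))
  omega

theorem QuasiFib.sum_filter_dvd_le (hN : 2 ≤ N) (hA : QuasiFib N A) (m : ℕ) :
    ∑ i ∈ (Ico 1 m).filter (N ∣ ·), A (m - i) ≤ A (m - 1) := by
  induction m using Nat.strong_induction_on with
  | _ m ih =>
  have not_dvd_of_lt {i : ℕ} (hi : i ∈ Ico 1 (min N m)) : ¬ N ∣ i := by
    simp only [mem_Ico, lt_min_iff] at hi
    exact Nat.not_dvd_of_pos_of_lt hi.1 hi.2.1
  rcases le_or_gt m N with hm | hm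
  · rw [sum_filter, sum_eq_zero fun i hi => if_neg (not_dvd_of_lt (by rwa [min_eq_right hm]))]
    exact Nat.zero_le _
  have hshift : ∑ i ∈ (Ico 1 (m - N)).filter (N ∣ ·), A (m - N - i) =
      ∑ i ∈ Ico (N + 1) m, if N ∣ i then A (m - i) else 0 := by
    have := sum_Ico_add' (fun i => if N ∣ i then A (m - i) else 0) 1 (m - N) N
    rw [Nat.sub_add_cancel hm.le, add_comm 1 N] at this
    rw [sum_filter, ← this]
    refine sum_congr rfl fun i _ => ?_
    simp only [Nat.dvd_add_self_right, show m - (i + N) = m - N - i by omega]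
  rw [sum_filter, ← sum_Ico_consecutive _ (by omega : 1 ≤ N + 1) hm,
    sum_Ico_succ_top (by omega),
    sum_eq_zero fun i hi => if_neg (not_dvd_of_lt (by rwa [min_eq_left hm.le])), if_pos dvd_rfl,
    zero_add, ← hshift]
  rcases Nat.eq_or_lt_of_le hm with rfl | hm
  · simpa using hA.monotoneOn (by omega) (le_refl 1) (by simp; omega) (by omega : 1 ≤ N)
  · have := hA.add_succ_le hN (i := m - N - 1) (by omega)
    rw [Nat.sub_add_cancel (by omega), show m - N - 1 + N = m - 1 by omega] at this
    have := ih (m - N) (by omega)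
    omega

theorem QuasiFib.sum_Icc_le_Ak2 (hN : 2 ≤ N) (hA : QuasiFib N A) {k : ℕ} (hk : N + 1 ≤ k) :
    ∑ j ∈ Icc 1 (k - 1), A j ≤ Ak2 N A k := by
  have hlow : ∑ j ∈ Icc 1 (k - 1), A j = ∑ j ∈ Ico 1 (k - N), A j + A k := by
    rw [hA.eq_sum_Ico hk, sum_Ico_consecutive _ (by omega) (by omega : k - N ≤ k)]
    exact sum_congr (by ext; simp; omega) fun _ _ => rfl
  have hreflect : ∑ i ∈ Ico 1 (k - N + 1), A (k - N + 1 - i) =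
      ∑ j ∈ Ico 1 (k - N), A j + A (k - N) := by
    rw [sum_Ico_reflect _ _ le_self_add, Nat.add_sub_cancel, Nat.add_sub_cancel_left,
      sum_Ico_succ_top (by omega)]
  have hsplit :=
    sum_filter_add_sum_filter_not (Ico 1 (k - N + 1)) (N ∣ ·) (fun i => A (k - N + 1 - i))
  have hdvd := hA.sum_filter_dvd_le hN (k - N + 1)
  rw [Nat.add_sub_cancel] at hdvd
  unfold Ak2
  omega

theorem lt_of_mem_SRep (hN : 1 ≤ N) (hA : QuasiFib N A) {n j : ℕ} {F : Finset ℕ}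
    (hF : F ∈ SRep A n) (hj : 1 ≤ j) (hn : n < A j) {i : ℕ} (hi : i ∈ F) : i < j := by
  by_contra! hji
  have : A i ≤ n := hF.2 ▸ single_le_sum (fun _ _ => Nat.zero_le _) hi
  have : A j ≤ A i := hA.monotoneOn hN hj (le_trans hj hji) hji
  omega

theorem mem_of_mem_SRep_of_sum_lt {n k : ℕ} {F : Finset ℕ} (hF : F ∈ SRep A n)
    (hle : ∀ i ∈ F, i ≤ k) (hn : ∑ j ∈ Icc 1 (k - 1), A j < n) : k ∈ F := by
  by_contra hk
  have hsub : F ⊆ Icc 1 (k - 1) := fun i hi => by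
    have := hF.1 i hi; have := hle i hi
    have : i ≠ k := ne_of_mem_of_not_mem hi hk
    simp only [mem_Icc]; omega
  have := hF.2 ▸ sum_le_sum_of_subset hsub
  omega

theorem bijOn_erase_SRep {n k : ℕ} (hk : 1 ≤ k) (hkn : A k ≤ n)
    (hmem : ∀ F ∈ SRep A n, k ∈ F) (hnot : ∀ G ∈ SRep A (n - A k), k ∉ G) :
    Set.BijOn (fun F => F.erase k) (SRep A n) (SRep A (n - A k)) := by
  refine Set.InvOn.bijOn (f' := insert k)
    ⟨fun F hF => insert_erase (hmem F hF), fun G hG => erase_insert (hnot G hG)⟩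
    (fun F hF => ⟨fun i hi => hF.1 i (mem_of_mem_erase hi), ?_⟩)
    (fun G hG => ⟨fun i hi => ?_, ?_⟩)
  · have := add_sum_erase F A (hmem F hF)
    have := hF.2
    omega
  · rcases mem_insert.1 hi with rfl | hi
    exacts [hk, hG.1 i hi]
  · rw [sum_insert (hnot G hG), hG.2]
    omega

end

theorem edge_erase_iff {N k : ℕ} {a b : Finset ℕ} (ha : k ∈ a) (hb : k ∈ b) :
    Edge N (a.erase k) (b.erase k) ↔ Edge N a b := by
  refine exists_congr fun j => ?_
  simp only [mem_erase, mem_Ico, mem_Icc]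
  constructor
  · rintro ⟨hj, ⟨hkN, haN⟩, ha', hbN, hb', hout⟩
    have hk : ¬ (j ≤ k ∧ k ≤ j + N) := fun ⟨h₁, h₂⟩ =>
      (Nat.lt_or_eq_of_le h₂).elim (fun h => (hb' k ⟨h₁, h⟩).1 rfl) fun h => hkN h.symm
    grind
  · rintro ⟨hj, haN, ha', hbN, hb', hout⟩
    have hk : ¬ (j ≤ k ∧ k ≤ j + N) := fun ⟨h₁, h₂⟩ =>
      (Nat.lt_or_eq_of_le h₂).elim (fun h => ha' k ⟨h₁, h⟩ ha) fun h => hbN (h ▸ hb)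
    grind

theorem len_eq_of_forall_le {F : Finset ℕ} {k : ℕ} (hle : ∀ i ∈ F, i ≤ k) (hk : k ∈ F) :
    len F = k :=
  le_antisymm (Finset.sup_le hle) (le_sup (f := id) hk)

/-- Proposition 4.3: for `k ≥ N+1` and `A_{k,2} < n < A_{k+1}`, every `a ∈ S_n` has
`l(a) = k` (in particular `a_k = 1`), and `a ↦ a - τ_k` (deleting position `k`) is a
bijection from `S_n` onto `S_{n-A_k}` preserving the edge relation in both directions;
i.e. `P_n ≅ P_{n-A_k}` and `P_n = P_{n-A_k} + τ_k`. -/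
theorem stmt_12 (N : ℕ) (hN : 2 ≤ N) (A : ℕ → ℕ) (hA : QuasiFib N A)
    (k n : ℕ) (hk : N + 1 ≤ k) (h1 : Ak2 N A k < n) (h2 : n < A (k + 1)) :
    (∀ F ∈ SRep A n, len F = k ∧ k ∈ F) ∧
    Set.BijOn (fun F => F.erase k) (SRep A n) (SRep A (n - A k)) ∧
    (∀ a ∈ SRep A n, ∀ b ∈ SRep A n,
      (Edge N a b ↔ Edge N (a.erase k) (b.erase k))) := by
  have hAk : A k < n := (Nat.le_add_right _ _).trans_lt h1
  have hmem : ∀ F ∈ SRep A n, (∀ i ∈ F, i ≤ k) ∧ k ∈ F := fun F hF =>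
    have hle : ∀ i ∈ F, i ≤ k := fun i hi =>
      Nat.lt_succ_iff.1 (lt_of_mem_SRep (by omega) hA hF (by omega) h2 hi)
    ⟨hle, mem_of_mem_SRep_of_sum_lt hF hle ((hA.sum_Icc_le_Ak2 hN hk).trans_lt h1)⟩
  have hnot : ∀ G ∈ SRep A (n - A k), k ∉ G := fun G hG hkG => by
    have := hA.succ_le_two_mul (by omega) hk
    exact (lt_of_mem_SRep (by omega) hA hG (by omega) (by omega) hkG).false
  exact ⟨fun F hF => ⟨len_eq_of_forall_le (hmem F hF).1 (hmem F hF).2, (hmem F hF).2⟩,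
    bijOn_erase_SRep (by omega) hAk.le (fun F hF => (hmem F hF).2) hnot,
    fun a ha b hb => (edge_erase_iff (hmem a ha).2 (hmem b hb).2).symm⟩
end

section
/- Let A_1, A_2, … be a quasifibonacci sequence of level N, let k ≥ N+1, and let n satisfy A_{k,0} < n ≤ A_{k,1}. Then: (i) the map a ↦ a − τ_k is a bijection from T_n = {a ∈ S_n : l(a) = k} onto S_{n−A_k} preserving the edge relation in both directions; (ii) every a ∈ R_n = {a ∈ S_n : l(a) = k−1} satisfies a_{k−N} = a_{k−N+1} = ⋯ = a_{k−1} = 1, and the map a ↦ a − η_k is a bijection from R_n onto S_{n−A_k} preserving the edge relation in both directions. -/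
section Aux
variable {N : ℕ} {A : ℕ → ℕ}

lemma len_mem_s14 {F : Finset ℕ} {c : ℕ} (h : len F = c) (hc : 1 ≤ c) : c ∈ F := by
  have hne : F.Nonempty := by
    rcases F.eq_empty_or_nonempty with h0 | h0
    · subst h0; simp [len] at h; omega
    · exact h0
  obtain ⟨b, hb, hb2⟩ := Finset.exists_mem_eq_sup F hne id
  have hbc : b = c := by rw [len] at h; rw [h] at hb2; simpa using hb2.symm
  rwa [hbc] at hb

lemma mem_le_len {F : Finset ℕ} {i : ℕ} (h : i ∈ F) : i ≤ len F :=
  Finset.le_sup (f := id) h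

lemma reindex1 {k : ℕ} (hk : N + 1 ≤ k) :
    ∑ i ∈ (Finset.Ico 1 (k - N)).filter (fun i => ¬ N ∣ i), A (k - N - i)
      = ∑ j ∈ (Finset.Icc 1 (k - N - 1)).filter (fun j => ¬ N ∣ (k - N - j)), A j := by
  refine Finset.sum_nbij' (fun i => k - N - i) (fun j => k - N - j) ?_ ?_ ?_ ?_ ?_
  · intro i hi
    simp only [Finset.mem_filter, Finset.mem_Ico] at hi
    simp only [Finset.mem_filter, Finset.mem_Icc]
    have h : k - N - (k - N - i) = i := by omega
    rw [h]
    exact ⟨⟨by omega, by omega⟩, hi.2⟩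
  · intro j hj
    simp only [Finset.mem_filter, Finset.mem_Icc] at hj
    simp only [Finset.mem_filter, Finset.mem_Ico]
    exact ⟨⟨by omega, by omega⟩, hj.2⟩
  · intro i hi
    simp only [Finset.mem_filter, Finset.mem_Ico] at hi
    omega
  · intro j hj
    simp only [Finset.mem_filter, Finset.mem_Icc] at hj
    omega
  · intro i _
    rfl

lemma reindex0 {k : ℕ} (hk : N + 1 ≤ k) :
    ∑ i ∈ (Finset.Ico 1 (k - N - 1)).filter (fun i => ¬ N ∣ i), A (k - N - 1 - i)
      = ∑ j ∈ (Finset.Icc 1 (k - N - 1)).filter (fun j => ¬ N ∣ (k - N - 1 - j)), A j := by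
  refine Finset.sum_nbij' (fun i => k - N - 1 - i) (fun j => k - N - 1 - j) ?_ ?_ ?_ ?_ ?_
  · intro i hi
    simp only [Finset.mem_filter, Finset.mem_Ico] at hi
    simp only [Finset.mem_filter, Finset.mem_Icc]
    have h : k - N - 1 - (k - N - 1 - i) = i := by omega
    rw [h]
    exact ⟨⟨by omega, by omega⟩, hi.2⟩
  · intro j hj
    simp only [Finset.mem_filter, Finset.mem_Icc] at hj
    simp only [Finset.mem_filter, Finset.mem_Ico]
    have hjne : j ≠ k - N - 1 := by
      intro h; subst h
      exact hj.2 ⟨0, by omega⟩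
    exact ⟨⟨by omega, by omega⟩, hj.2⟩
  · intro i hi
    simp only [Finset.mem_filter, Finset.mem_Ico] at hi
    omega
  · intro j hj
    simp only [Finset.mem_filter, Finset.mem_Icc] at hj
    have hjne : j ≠ k - N - 1 := by
      intro h; subst h
      exact hj.2 ⟨0, by omega⟩
    omega
  · intro i _
    rfl

end Aux

section
variable {N : ℕ} {A : ℕ → ℕ}

lemma qf_rec' (hA : QuasiFib N A) {a b : ℕ} (ha : 1 ≤ a) (hb : b = a + N) :
    A b = ∑ i ∈ Finset.Icc a (b - 1), A i := by
  subst hb; exact hA.2.1 a ha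

lemma qf_succ_lt (hN : 2 ≤ N) (hA : QuasiFib N A) (i : ℕ) (hi : 1 ≤ i) : A i < A (i + 1) := by
  rcases le_or_gt (i + 1) N with h | h
  · have h3 := hA.2.2 (i + 1) (by omega) h
    have h4 : A i ≤ ∑ j ∈ Finset.Icc 1 (i + 1 - 1), A j := by
      apply Finset.single_le_sum (fun j _ => Nat.zero_le _)
      simp; omega
    omega
  · have hr := qf_rec' hA (a := i + 1 - N) (b := i + 1) (by omega) (by omega)
    have hpair : A (i + 1 - N) + A i ≤ ∑ j ∈ Finset.Icc (i + 1 - N) (i + 1 - 1), A j := by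
      have hsub : ({i + 1 - N, i} : Finset ℕ) ⊆ Finset.Icc (i + 1 - N) (i + 1 - 1) := by
        intro x hx; simp at hx; rcases hx with h | h <;> simp [h] <;> omega
      calc A (i + 1 - N) + A i = ∑ j ∈ ({i + 1 - N, i} : Finset ℕ), A j :=
            (Finset.sum_pair (by omega)).symm
        _ ≤ _ := Finset.sum_le_sum_of_subset hsub
    have := hA.1 (i + 1 - N) (by omega)
    omega

lemma qf_lt (hN : 2 ≤ N) (hA : QuasiFib N A) {i j : ℕ} (hi : 1 ≤ i) (hij : i < j) :
    A i < A j := by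
  induction j with
  | zero => omega
  | succ m ih =>
    rcases Nat.lt_or_ge i m with h | h
    · exact lt_trans (ih h) (qf_succ_lt hN hA m (by omega))
    · have : i = m := by omega
      subst this; exact qf_succ_lt hN hA i hi

lemma qf_le (hN : 2 ≤ N) (hA : QuasiFib N A) {i j : ℕ} (hi : 1 ≤ i) (hij : i ≤ j) :
    A i ≤ A j := by
  rcases eq_or_lt_of_le hij with h | h
  · exact le_of_eq (by rw [h])
  · exact le_of_lt (qf_lt hN hA hi h)

/-- D-lemma: sum over j ≤ m with j ≡ m (mod N) is at most A (m+1). -/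
lemma qf_D (hN : 2 ≤ N) (hA : QuasiFib N A) :
    ∀ m, (∑ j ∈ (Finset.Icc 1 m).filter (fun j => N ∣ (m - j)), A j) ≤ A (m + 1) := by
  intro m
  induction m using Nat.strong_induction_on with
  | _ m ih =>
    rcases Nat.lt_or_ge m N with hm | hm
    · -- m + 1 ≤ N
      rcases Nat.eq_zero_or_pos m with h0 | h0
      · subst h0; simp
      have h3 := hA.2.2 (m + 1) (by omega) (by omega)
      simp only [Nat.add_sub_cancel] at h3
      calc (∑ j ∈ (Finset.Icc 1 m).filter (fun j => N ∣ (m - j)), A j)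
          ≤ ∑ j ∈ Finset.Icc 1 m, A j :=
            Finset.sum_le_sum_of_subset (Finset.filter_subset _ _)
        _ ≤ A (m + 1) := le_of_lt h3
    · -- m ≥ N
      have hsub : (Finset.Icc 1 m).filter (fun j => N ∣ (m - j)) ⊆
          insert m ((Finset.Icc 1 (m - N)).filter (fun j => N ∣ (m - N - j))) := by
        intro j hj
        simp only [Finset.mem_filter, Finset.mem_Icc] at hj
        simp only [Finset.mem_insert, Finset.mem_filter, Finset.mem_Icc]
        rcases eq_or_ne j m with h | h
        · exact Or.inl h
        · right
          obtain ⟨t, ht⟩ := hj.2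
          have htpos : 1 ≤ t := by
            rcases Nat.eq_zero_or_pos t with h0 | h0
            · subst h0; simp at ht; omega
            · exact h0
          have hNt : N ≤ N * t := Nat.le_mul_of_pos_right N htpos
          have hmul : N * (t - 1) = N * t - N := by rw [Nat.mul_sub, mul_one]
          exact ⟨⟨hj.1.1, by omega⟩, ⟨t - 1, by omega⟩⟩
      have hnm : m ∉ (Finset.Icc 1 (m - N)).filter (fun j => N ∣ (m - N - j)) := by
        simp only [Finset.mem_filter, Finset.mem_Icc]; omega
      have h1 : (∑ j ∈ (Finset.Icc 1 m).filter (fun j => N ∣ (m - j)), A j)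
          ≤ A m + ∑ j ∈ (Finset.Icc 1 (m - N)).filter (fun j => N ∣ (m - N - j)), A j := by
        calc (∑ j ∈ (Finset.Icc 1 m).filter (fun j => N ∣ (m - j)), A j)
            ≤ ∑ j ∈ insert m ((Finset.Icc 1 (m - N)).filter (fun j => N ∣ (m - N - j))), A j :=
              Finset.sum_le_sum_of_subset hsub
          _ = A m + _ := Finset.sum_insert hnm
      have h2 := ih (m - N) (by omega)
      -- A m + A (m - N + 1) ≤ A (m + 1)
      have hr := qf_rec' hA (a := m + 1 - N) (b := m + 1) (by omega) (by omega)
      have hpair : A (m + 1 - N) + A m ≤ ∑ j ∈ Finset.Icc (m + 1 - N) (m + 1 - 1), A j := by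
        have hsub2 : ({m + 1 - N, m} : Finset ℕ) ⊆ Finset.Icc (m + 1 - N) (m + 1 - 1) := by
          intro x hx; simp at hx; rcases hx with h | h <;> simp [h] <;> omega
        calc A (m + 1 - N) + A m = ∑ j ∈ ({m + 1 - N, m} : Finset ℕ), A j :=
              (Finset.sum_pair (by omega)).symm
          _ ≤ _ := Finset.sum_le_sum_of_subset hsub2
      have heq : m - N + 1 = m + 1 - N := by omega
      rw [heq] at h2
      omega

end

section
variable {N : ℕ} {A : ℕ → ℕ}

/-- C-lemma: sum over j ≤ m with j ≢ m+1 (mod N) is less than A (m+1). -/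
lemma qf_C (hN : 2 ≤ N) (hA : QuasiFib N A) :
    ∀ m, (∑ j ∈ (Finset.Icc 1 m).filter (fun j => ¬ N ∣ (m + 1 - j)), A j) < A (m + 1) := by
  intro m
  induction m using Nat.strong_induction_on with
  | _ m ih =>
    rcases Nat.lt_or_ge m N with hm | hm
    · rcases Nat.eq_zero_or_pos m with h0 | h0
      · subst h0; simpa using hA.1 1 le_rfl
      have h3 := hA.2.2 (m + 1) (by omega) (by omega)
      simp only [Nat.add_sub_cancel] at h3
      calc (∑ j ∈ (Finset.Icc 1 m).filter (fun j => ¬ N ∣ (m + 1 - j)), A j)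
          ≤ ∑ j ∈ Finset.Icc 1 m, A j :=
            Finset.sum_le_sum_of_subset (Finset.filter_subset _ _)
        _ < A (m + 1) := h3
    · -- m ≥ N
      set L := (Finset.Icc 1 (m - N)).filter (fun j => ¬ N ∣ (m - N + 1 - j)) with hL
      have hsub : (Finset.Icc 1 m).filter (fun j => ¬ N ∣ (m + 1 - j)) ⊆
          L ∪ Finset.Icc (m - N + 2) m := by
        intro j hj
        simp only [Finset.mem_filter, Finset.mem_Icc] at hj
        simp only [hL, Finset.mem_union, Finset.mem_filter, Finset.mem_Icc]
        rcases Nat.lt_or_ge j (m - N + 2) with hj2 | hj2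
        · left
          have hjne : j ≠ m - N + 1 := by
            intro h; subst h
            exact hj.2 ⟨1, by omega⟩
          refine ⟨⟨hj.1.1, by omega⟩, ?_⟩
          intro ⟨t, ht⟩
          exact hj.2 ⟨t + 1, by have : N * (t + 1) = N * t + N := by ring
                                omega⟩
        · right; exact ⟨hj2, hj.1.2⟩
      have hdisj : Disjoint L (Finset.Icc (m - N + 2) m) := by
        rw [Finset.disjoint_left]
        intro j hjL hjR
        simp only [hL, Finset.mem_filter, Finset.mem_Icc] at hjL
        simp only [Finset.mem_Icc] at hjR
        omega
      have h1 : (∑ j ∈ (Finset.Icc 1 m).filter (fun j => ¬ N ∣ (m + 1 - j)), A j)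
          ≤ (∑ j ∈ L, A j) + ∑ j ∈ Finset.Icc (m - N + 2) m, A j := by
        calc (∑ j ∈ (Finset.Icc 1 m).filter (fun j => ¬ N ∣ (m + 1 - j)), A j)
            ≤ ∑ j ∈ L ∪ Finset.Icc (m - N + 2) m, A j := Finset.sum_le_sum_of_subset hsub
          _ = _ := Finset.sum_union hdisj
      have h2 := ih (m - N) (by omega)
      rw [← hL] at h2
      have hr := qf_rec' hA (a := m + 1 - N) (b := m + 1) (by omega) (by omega)
      have hsplit : Finset.Icc (m + 1 - N) (m + 1 - 1) =
          insert (m - N + 1) (Finset.Icc (m - N + 2) m) := by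
        ext x
        simp only [Finset.mem_insert, Finset.mem_Icc]
        omega
      have hnotmem : (m - N + 1) ∉ Finset.Icc (m - N + 2) m := by
        simp only [Finset.mem_Icc]; omega
      rw [hsplit, Finset.sum_insert hnotmem] at hr
      omega

end


/-- Proposition 4.5: for `k ≥ N+1` and `A_{k,0} < n ≤ A_{k,1}`:
(i) `a ↦ a - τ_k` is a bijection from `T_n = {a ∈ S_n : l(a) = k}` onto `S_{n-A_k}`
preserving the edge relation in both directions;
(ii) every `a ∈ R_n = {a ∈ S_n : l(a) = k-1}` satisfies `a_{k-N} = ⋯ = a_{k-1} = 1`, and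
`a ↦ a - η_k` is a bijection from `R_n` onto `S_{n-A_k}` preserving the edge relation in
both directions. -/
theorem stmt_14 (N : ℕ) (hN : 2 ≤ N) (A : ℕ → ℕ) (hA : QuasiFib N A)
    (k n : ℕ) (hk : N + 1 ≤ k) (h1 : Ak0 N A k < n) (h2 : n ≤ Ak1 N A k) :
    (Set.BijOn (fun F => F.erase k) {F | F ∈ SRep A n ∧ len F = k} (SRep A (n - A k)) ∧
      (∀ a, a ∈ SRep A n → len a = k → ∀ b, b ∈ SRep A n → len b = k →
        (Edge N a b ↔ Edge N (a.erase k) (b.erase k)))) ∧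
    ((∀ a, a ∈ SRep A n → len a = k - 1 → Finset.Icc (k - N) (k - 1) ⊆ a) ∧
      Set.BijOn (fun F => F \ Finset.Icc (k - N) (k - 1))
        {F | F ∈ SRep A n ∧ len F = k - 1} (SRep A (n - A k)) ∧
      (∀ a, a ∈ SRep A n → len a = k - 1 → ∀ b, b ∈ SRep A n → len b = k - 1 →
        (Edge N a b ↔
          Edge N (a \ Finset.Icc (k - N) (k - 1)) (b \ Finset.Icc (k - N) (k - 1))))) := by
  have hSRep : ∀ (F : Finset ℕ) (n' : ℕ),
      F ∈ SRep A n' ↔ ((∀ i ∈ F, 1 ≤ i) ∧ (∑ i ∈ F, A i) = n') := fun F n' => Iff.rfl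
  have hkN1 : 1 ≤ k - N := by omega
  have hAk : A k = ∑ i ∈ Finset.Icc (k - N) (k - 1), A i :=
    qf_rec' hA (a := k - N) hkN1 (by omega)
  have hAkpos : 0 < A k := hA.1 k (by omega)
  have hAkle : A k ≤ Ak0 N A k := Nat.le_add_right _ _
  have hAkn : A k < n := lt_of_le_of_lt hAkle h1
  have hC := qf_C hN hA (k - N - 1)
  have hD := qf_D hN hA (k - N - 1)
  have hm1 : k - N - 1 + 1 = k - N := by omega
  rw [hm1] at hC hD
  have hAk1eq : Ak1 N A k
      = A k + ∑ j ∈ (Finset.Icc 1 (k - N - 1)).filter (fun j => ¬ N ∣ (k - N - j)), A j := by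
    unfold Ak1; rw [reindex1 hk]
  have hAk0eq : Ak0 N A k
      = A k + ∑ j ∈ (Finset.Icc 1 (k - N - 1)).filter (fun j => ¬ N ∣ (k - N - 1 - j)), A j := by
    unfold Ak0; rw [reindex0 hk]
  have hkey : n - A k < A (k - N) := by omega
  have hsmall : ∀ G : Finset ℕ, G ∈ SRep A (n - A k) → ∀ j ∈ G, j < k - N := by
    intro G hG j hj
    obtain ⟨hG1, hG2⟩ := (hSRep _ _).mp hG
    by_contra hcon
    push_neg at hcon
    have hle : A (k - N) ≤ A j := qf_le hN hA hkN1 hcon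
    have hle2 : A j ≤ n - A k := by
      rw [← hG2]
      exact Finset.single_le_sum (fun i _ => Nat.zero_le _) hj
    omega
  have hfull : ∀ a, a ∈ SRep A n → len a = k - 1 → Finset.Icc (k - N) (k - 1) ⊆ a := by
    intro a haS hla
    obtain ⟨ha1, ha2⟩ := (hSRep _ _).mp haS
    have hbound : ∀ i ∈ a, i ≤ k - 1 := by
      intro i hi
      have h := mem_le_len hi
      rw [hla] at h; exact h
    intro j0 hj0
    simp only [Finset.mem_Icc] at hj0
    by_contra hj0a
    have hsub : a ⊆ (Finset.Icc 1 (k - 1)).erase j0 := by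
      intro x hx
      exact Finset.mem_erase.mpr ⟨fun h => hj0a (h ▸ hx),
        Finset.mem_Icc.mpr ⟨ha1 x hx, hbound x hx⟩⟩
    have hle : n ≤ ∑ i ∈ (Finset.Icc 1 (k - 1)).erase j0, A i := by
      rw [← ha2]; exact Finset.sum_le_sum_of_subset hsub
    have hj0mem : j0 ∈ Finset.Icc 1 (k - 1) := Finset.mem_Icc.mpr ⟨by omega, hj0.2⟩
    have herase : ∑ i ∈ (Finset.Icc 1 (k - 1)).erase j0, A i + A j0
        = ∑ i ∈ Finset.Icc 1 (k - 1), A i := Finset.sum_erase_add _ _ hj0mem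
    have hdisj' : Disjoint (Finset.Icc 1 (k - N - 1)) (Finset.Icc (k - N) (k - 1)) := by
      rw [Finset.disjoint_left]; intro x hx hx2
      simp only [Finset.mem_Icc] at hx hx2; omega
    have hsplit : ∑ i ∈ Finset.Icc 1 (k - 1), A i
        = ∑ i ∈ Finset.Icc 1 (k - N - 1), A i + ∑ i ∈ Finset.Icc (k - N) (k - 1), A i := by
      rw [← Finset.sum_union hdisj']
      congr 1
      ext x; simp only [Finset.mem_union, Finset.mem_Icc]; omega
    have hfilter : ∑ i ∈ Finset.Icc 1 (k - N - 1), A i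
        = (∑ j ∈ (Finset.Icc 1 (k - N - 1)).filter (fun j => N ∣ (k - N - 1 - j)), A j)
          + ∑ j ∈ (Finset.Icc 1 (k - N - 1)).filter (fun j => ¬ N ∣ (k - N - 1 - j)), A j :=
      (Finset.sum_filter_add_sum_filter_not _ _ _).symm
    have hj0A : A (k - N) ≤ A j0 := qf_le hN hA hkN1 hj0.1
    omega
  refine ⟨⟨⟨?_, ?_, ?_⟩, ?_⟩, hfull, ⟨?_, ?_, ?_⟩, ?_⟩
  · -- MapsTo (i)
    rintro F ⟨hFS, hlF⟩
    obtain ⟨hF1, hF2⟩ := (hSRep _ _).mp hFS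
    have hkF : k ∈ F := len_mem_s14 hlF (by omega)
    show F.erase k ∈ SRep A (n - A k)
    refine (hSRep _ _).mpr ⟨fun i hi => hF1 i (Finset.mem_of_mem_erase hi), ?_⟩
    have h := Finset.sum_erase_add F A hkF
    omega
  · -- InjOn (i)
    rintro F ⟨hFS, hlF⟩ G ⟨hGS, hlG⟩ hEq
    have hkF : k ∈ F := len_mem_s14 hlF (by omega)
    have hkG : k ∈ G := len_mem_s14 hlG (by omega)
    simp only at hEq
    rw [← Finset.insert_erase hkF, ← Finset.insert_erase hkG, hEq]
  · -- SurjOn (i)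
    intro G hG
    have hGlt := hsmall G hG
    obtain ⟨hG1, hG2⟩ := (hSRep _ _).mp hG
    have hkG : k ∉ G := fun h => by have := hGlt k h; omega
    refine ⟨insert k G, ⟨(hSRep _ _).mpr ⟨?_, ?_⟩, ?_⟩, ?_⟩
    · intro i hi
      rcases Finset.mem_insert.mp hi with h | h
      · omega
      · exact hG1 i h
    · rw [Finset.sum_insert hkG, hG2]; omega
    · apply le_antisymm
      · apply Finset.sup_le
        intro b hb
        rcases Finset.mem_insert.mp hb with h | h
        · simp [h]
        · have := hGlt b h; simp only [id]; omega
      · exact mem_le_len (Finset.mem_insert_self k G)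
    · simp only
      exact Finset.erase_insert hkG
  · -- Edge iff (i)
    intro a haS hla b hbS hlb
    have hka : k ∈ a := len_mem_s14 hla (by omega)
    have hkb : k ∈ b := len_mem_s14 hlb (by omega)
    have habd : ∀ i ∈ a, i ≤ k := by
      intro i hi; have h := mem_le_len hi; rw [hla] at h; exact h
    constructor
    · rintro ⟨j, hj1, hj2, hj3, hj4, hj5, hj6⟩
      have hjNk : j + N ≠ k := fun h => hj4 (h ▸ hkb)
      have hknot : k ∉ Finset.Icc j (j + N) := by
        simp only [Finset.mem_Icc]
        rintro ⟨h1', h2'⟩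
        have hlt : k < j + N := by omega
        exact hj3 k (Finset.mem_Ico.mpr ⟨h1', hlt⟩) hka
      refine ⟨j, hj1, Finset.mem_erase.mpr ⟨hjNk, hj2⟩, ?_, ?_, ?_, ?_⟩
      · intro i hi hmem
        exact hj3 i hi (Finset.mem_of_mem_erase hmem)
      · intro h; exact hj4 (Finset.mem_of_mem_erase h)
      · intro i hi
        refine Finset.mem_erase.mpr ⟨?_, hj5 i hi⟩
        intro h; subst h
        refine hknot (Finset.mem_Icc.mpr ?_)
        simp only [Finset.mem_Ico] at hi; omega
      · intro t ht
        simp only [Finset.mem_erase]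
        rw [hj6 t ht]
    · rintro ⟨j, hj1, hj2, hj3, hj4, hj5, hj6⟩
      have hjN : j + N ∈ a := Finset.mem_of_mem_erase hj2
      have hjNne : j + N ≠ k := (Finset.mem_erase.mp hj2).1
      have hjNlt : j + N < k := lt_of_le_of_ne (habd _ hjN) hjNne
      refine ⟨j, hj1, hjN, ?_, ?_, ?_, ?_⟩
      · intro i hi hmem
        have hik : i ≠ k := by simp only [Finset.mem_Ico] at hi; omega
        exact hj3 i hi (Finset.mem_erase.mpr ⟨hik, hmem⟩)
      · intro h
        exact hj4 (Finset.mem_erase.mpr ⟨hjNne, h⟩)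
      · intro i hi
        exact Finset.mem_of_mem_erase (hj5 i hi)
      · intro t ht
        rcases eq_or_ne t k with rfl | htk
        · simp [hka, hkb]
        · simpa [Finset.mem_erase, htk] using hj6 t ht
  · -- MapsTo (ii)
    rintro F ⟨hFS, hlF⟩
    have hIF := hfull F hFS hlF
    obtain ⟨hF1, hF2⟩ := (hSRep _ _).mp hFS
    show F \ Finset.Icc (k - N) (k - 1) ∈ SRep A (n - A k)
    refine (hSRep _ _).mpr ⟨fun i hi => hF1 i (Finset.mem_sdiff.mp hi).1, ?_⟩
    have hsd : ∑ i ∈ F \ Finset.Icc (k - N) (k - 1), A i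
        + ∑ i ∈ Finset.Icc (k - N) (k - 1), A i = ∑ i ∈ F, A i := Finset.sum_sdiff hIF
    omega
  · -- InjOn (ii)
    rintro F ⟨hFS, hlF⟩ G ⟨hGS, hlG⟩ hEq
    have hIF := hfull F hFS hlF
    have hIG := hfull G hGS hlG
    simp only at hEq
    rw [← Finset.sdiff_union_of_subset hIF, ← Finset.sdiff_union_of_subset hIG, hEq]
  · -- SurjOn (ii)
    intro G hG
    have hGlt := hsmall G hG
    obtain ⟨hG1, hG2⟩ := (hSRep _ _).mp hG
    have hdisj : Disjoint G (Finset.Icc (k - N) (k - 1)) := by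
      rw [Finset.disjoint_left]; intro x hx hx2
      simp only [Finset.mem_Icc] at hx2
      have := hGlt x hx; omega
    refine ⟨G ∪ Finset.Icc (k - N) (k - 1), ⟨(hSRep _ _).mpr ⟨?_, ?_⟩, ?_⟩, ?_⟩
    · intro i hi
      rcases Finset.mem_union.mp hi with h | h
      · exact hG1 i h
      · simp only [Finset.mem_Icc] at h; omega
    · rw [Finset.sum_union hdisj, hG2, ← hAk]; omega
    · apply le_antisymm
      · apply Finset.sup_le
        intro b hb
        rcases Finset.mem_union.mp hb with h | h
        · have := hGlt b h; simp only [id]; omega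
        · simp only [Finset.mem_Icc] at h; simp only [id]; omega
      · exact mem_le_len (Finset.mem_union_right _ (Finset.mem_Icc.mpr ⟨by omega, le_refl _⟩))
    · simp only
      ext x
      simp only [Finset.mem_sdiff, Finset.mem_union]
      constructor
      · rintro ⟨h | h, hnot⟩
        · exact h
        · exact absurd h hnot
      · intro hx
        refine ⟨Or.inl hx, fun h2 => ?_⟩
        simp only [Finset.mem_Icc] at h2
        have := hGlt x hx; omega
  · -- Edge iff (ii)
    intro a haS hla b hbS hlb
    have hIa := hfull a haS hla
    have hIb := hfull b hbS hlb
    have habd : ∀ i ∈ a, i ≤ k - 1 := by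
      intro i hi; have h := mem_le_len hi; rw [hla] at h; exact h
    constructor
    · rintro ⟨j, hj1, hj2, hj3, hj4, hj5, hj6⟩
      have hjNb : j + N ∉ Finset.Icc (k - N) (k - 1) := fun h => hj4 (hIb h)
      have hjNk : j + N ≤ k - 1 := habd _ hj2
      have hjNlt : j + N < k - N := by
        simp only [Finset.mem_Icc] at hjNb; omega
      refine ⟨j, hj1, Finset.mem_sdiff.mpr ⟨hj2, hjNb⟩, ?_, ?_, ?_, ?_⟩
      · intro i hi hmem
        exact hj3 i hi (Finset.mem_sdiff.mp hmem).1
      · intro h; exact hj4 (Finset.mem_sdiff.mp h).1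
      · intro i hi
        refine Finset.mem_sdiff.mpr ⟨hj5 i hi, ?_⟩
        simp only [Finset.mem_Ico] at hi
        simp only [Finset.mem_Icc]; omega
      · intro t ht
        simp only [Finset.mem_sdiff]
        rw [hj6 t ht]
    · rintro ⟨j, hj1, hj2, hj3, hj4, hj5, hj6⟩
      obtain ⟨hjNa, hjNI⟩ := Finset.mem_sdiff.mp hj2
      have hjNk : j + N ≤ k - 1 := habd _ hjNa
      have hjNlt : j + N < k - N := by
        simp only [Finset.mem_Icc] at hjNI; omega
      refine ⟨j, hj1, hjNa, ?_, ?_, ?_, ?_⟩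
      · intro i hi hmem
        refine hj3 i hi (Finset.mem_sdiff.mpr ⟨hmem, ?_⟩)
        simp only [Finset.mem_Ico] at hi
        simp only [Finset.mem_Icc]; omega
      · intro h
        exact hj4 (Finset.mem_sdiff.mpr ⟨h, hjNI⟩)
      · intro i hi
        exact (Finset.mem_sdiff.mp (hj5 i hi)).1
      · intro t ht
        by_cases htI : t ∈ Finset.Icc (k - N) (k - 1)
        · simp [hIa htI, hIb htI]
        · have h6 := hj6 t ht
          simp only [Finset.mem_sdiff, htI, not_false_iff, and_true] at h6
          exact h6
end
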